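/- arXiv:2208.07808 — 2 statements merged into one kernel-verified Lean document; each statement's English description precedes it below -/
import Mathlib

section
/- Let (A, E, s) be a skeletally small extriangulated category whose zero object is (E, s)-simple-like. Then: (i) [M] = [0] in the Grothendieck monoid M(A, E, s) if and only if M is a zero object; (ii) M(A, E, s) is reduced; (iii) if in addition (A, E, s) is weakly idempotent complete, then the assignment [S] ↦ [S] is a bijection from the set of isomorphism classes of (E, s)-simple objects of A onto the set of atoms of M(A, E, s). -/
/-!
Common axiomatic framework: extriangulated categories in the sense of Nakaoka–Palu,
formalised as a biadditive functor `E` together with a realisation predicate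
`IsExtriangle` subject to the axioms (ET1)–(ET4), (ET3)ᵒᵖ, (ET4)ᵒᵖ.
-/

open CategoryTheory CategoryTheory.Limits ZeroObject

attribute [local instance] CategoryTheory.Limits.hasBinaryBiproducts_of_finite_biproducts

universe v u

namespace ExtriPaper

/-- The data underlying an extriangulated category: a biadditive functor `E` and,
for each extension `δ ∈ E(X, A)`, the predicate picking out the pairs of composable
morphisms `A ⟶ B ⟶ X` belonging to the equivalence class `s(δ)`. -/
structure PreExt (C : Type u) [Category.{v} C] [Preadditive C] where
  E : Cᵒᵖ ⥤ C ⥤ AddCommGrpCat.{v}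
  IsExtriangle : ∀ {A B X : C}, (A ⟶ B) → (B ⟶ X) → ↥((E.obj (Opposite.op X)).obj A) → Prop

namespace PreExt

variable {C : Type u} [Category.{v} C] [Preadditive C]
variable (S : PreExt C)

/-- The group `E(X, A)` of extensions of `X` by `A`. -/
abbrev Ext (X A : C) : Type v := ↥((S.E.obj (Opposite.op X)).obj A)

/-- Pushforward `a_* δ` of an extension along `a : A ⟶ A'`. -/
def push {X A A' : C} (a : A ⟶ A') (δ : S.Ext X A) : S.Ext X A' :=
  (S.E.obj (Opposite.op X)).map a δ

/-- Pullback `c^* δ` of an extension along `c : X' ⟶ X`. -/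
def pull {X' X A : C} (c : X' ⟶ X) (δ : S.Ext X A) : S.Ext X' A :=
  (S.E.map c.op).app A δ

section Axioms

variable [HasZeroObject C] [HasFiniteBiproducts C]

/-- The direct sum `δ ⊕ δ'` of two extensions. -/
noncomputable def sumExt {X X' A A' : C} (δ : S.Ext X A) (δ' : S.Ext X' A') :
    S.Ext (X ⊞ X') (A ⊞ A') :=
  S.push biprod.inl (S.pull biprod.fst δ) + S.push biprod.inr (S.pull biprod.snd δ')

/-- The axioms of an extriangulated category (Nakaoka–Palu): `E` is biadditive,
`s` (encoded by `IsExtriangle`) is an additive realisation defined on equivalence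
classes, and the axioms (ET3), (ET3)ᵒᵖ, (ET4), (ET4)ᵒᵖ hold. -/
structure IsET : Prop where
  /-- Biadditivity of `E` in the covariant variable. -/
  push_add : ∀ {X A A' : C} (a b : A ⟶ A') (δ : S.Ext X A),
      S.push (a + b) δ = S.push a δ + S.push b δ
  /-- Biadditivity of `E` in the contravariant variable. -/
  pull_add : ∀ {X X' A : C} (c d : X' ⟶ X) (δ : S.Ext X A),
      S.pull (c + d) δ = S.pull c δ + S.pull d δ
  /-- Every extension is realised by a pair of composable morphisms. -/
  realize_exists : ∀ {A X : C} (δ : S.Ext X A),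
      ∃ (B : C) (f : A ⟶ B) (g : B ⟶ X), S.IsExtriangle f g δ
  /-- The realisation is closed under equivalence of pairs of composable morphisms. -/
  realize_iso : ∀ {A B B' X : C} {f : A ⟶ B} {g : B ⟶ X} {δ : S.Ext X A} (e : B ≅ B'),
      S.IsExtriangle f g δ → S.IsExtriangle (f ≫ e.hom) (e.inv ≫ g) δ
  /-- Any two realisations of the same extension are equivalent. -/
  realize_unique : ∀ {A B B' X : C} {f : A ⟶ B} {g : B ⟶ X} {f' : A ⟶ B'} {g' : B' ⟶ X}
      {δ : S.Ext X A}, S.IsExtriangle f g δ → S.IsExtriangle f' g' δ →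
      ∃ e : B ≅ B', f ≫ e.hom = f' ∧ e.hom ≫ g' = g
  /-- Morphisms of extensions lift to morphisms of extriangles. -/
  realize_map : ∀ {A B X A' B' X' : C} {f : A ⟶ B} {g : B ⟶ X} {δ : S.Ext X A}
      {f' : A' ⟶ B'} {g' : B' ⟶ X'} {δ' : S.Ext X' A'},
      S.IsExtriangle f g δ → S.IsExtriangle f' g' δ' →
      ∀ (a : A ⟶ A') (c : X ⟶ X'), S.push a δ = S.pull c δ' →
      ∃ b : B ⟶ B', f ≫ b = a ≫ f' ∧ b ≫ g' = g ≫ c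
  /-- The zero extension is realised by the split pair. -/
  realize_zero : ∀ (A X : C),
      S.IsExtriangle (biprod.inl : A ⟶ A ⊞ X) (biprod.snd : A ⊞ X ⟶ X) (0 : S.Ext X A)
  /-- The realisation is additive. -/
  realize_sum : ∀ {A B X A' B' X' : C} {f : A ⟶ B} {g : B ⟶ X} {δ : S.Ext X A}
      {f' : A' ⟶ B'} {g' : B' ⟶ X'} {δ' : S.Ext X' A'},
      S.IsExtriangle f g δ → S.IsExtriangle f' g' δ' →
      S.IsExtriangle (biprod.map f f') (biprod.map g g') (S.sumExt δ δ')
  /-- Axiom (ET3). -/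
  et3 : ∀ {A B X A' B' X' : C} {f : A ⟶ B} {g : B ⟶ X} {δ : S.Ext X A}
      {f' : A' ⟶ B'} {g' : B' ⟶ X'} {δ' : S.Ext X' A'},
      S.IsExtriangle f g δ → S.IsExtriangle f' g' δ' →
      ∀ (a : A ⟶ A') (b : B ⟶ B'), f ≫ b = a ≫ f' →
      ∃ c : X ⟶ X', g ≫ c = b ≫ g' ∧ S.push a δ = S.pull c δ'
  /-- Axiom (ET3)ᵒᵖ. -/
  et3op : ∀ {A B X A' B' X' : C} {f : A ⟶ B} {g : B ⟶ X} {δ : S.Ext X A}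
      {f' : A' ⟶ B'} {g' : B' ⟶ X'} {δ' : S.Ext X' A'},
      S.IsExtriangle f g δ → S.IsExtriangle f' g' δ' →
      ∀ (b : B ⟶ B') (c : X ⟶ X'), g ≫ c = b ≫ g' →
      ∃ a : A ⟶ A', f ≫ b = a ≫ f' ∧ S.push a δ = S.pull c δ'
  /-- Axiom (ET4). -/
  et4 : ∀ {A B D F G : C} {f : A ⟶ B} {f' : B ⟶ D} {δ : S.Ext D A}
      {g : B ⟶ G} {g' : G ⟶ F} {δ' : S.Ext F B},
      S.IsExtriangle f f' δ → S.IsExtriangle g g' δ' →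
      ∃ (E₀ : C) (h : G ⟶ E₀) (d : D ⟶ E₀) (e : E₀ ⟶ F) (δ'' : S.Ext E₀ A),
        S.IsExtriangle (f ≫ g) h δ'' ∧
        S.IsExtriangle d e (S.push f' δ') ∧
        S.pull d δ'' = δ ∧
        S.push f δ'' = S.pull e δ' ∧
        f' ≫ d = g ≫ h ∧ h ≫ e = g'
  /-- Axiom (ET4)ᵒᵖ. -/
  et4op : ∀ {D B A F G : C} {p : D ⟶ B} {f₁ : B ⟶ A} {δ₁ : S.Ext A D}
      {q : F ⟶ G} {g₁ : G ⟶ B} {δ₁' : S.Ext B F},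
      S.IsExtriangle p f₁ δ₁ → S.IsExtriangle q g₁ δ₁' →
      ∃ (E₀ : C) (h : E₀ ⟶ G) (d : E₀ ⟶ D) (e : F ⟶ E₀) (δ'' : S.Ext A E₀),
        S.IsExtriangle h (g₁ ≫ f₁) δ'' ∧
        S.IsExtriangle e d (S.pull p δ₁') ∧
        S.push d δ'' = δ₁ ∧
        S.pull f₁ δ'' = S.push e δ₁' ∧
        d ≫ p = h ≫ g₁ ∧ e ≫ h = q

end Axioms

/-- A morphism is an inflation if it occurs as the first morphism of an extriangle. -/
def IsInflation {A B : C} (f : A ⟶ B) : Prop :=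
  ∃ (X : C) (g : B ⟶ X) (δ : S.Ext X A), S.IsExtriangle f g δ

/-- A morphism is a deflation if it occurs as the second morphism of an extriangle. -/
def IsDeflation {B X : C} (g : B ⟶ X) : Prop :=
  ∃ (A : C) (f : A ⟶ B) (δ : S.Ext X A), S.IsExtriangle f g δ

/-- An isomorphism of extriangles: a triple of isomorphisms compatible with the
structure morphisms and identifying the two extensions. -/
def TriIso {A B X A' B' X' : C} (f : A ⟶ B) (g : B ⟶ X) (δ : S.Ext X A)
    (f' : A' ⟶ B') (g' : B' ⟶ X') (δ' : S.Ext X' A') : Prop :=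
  ∃ (iA : A ≅ A') (iB : B ≅ B') (iX : X ≅ X'),
    f ≫ iB.hom = iA.hom ≫ f' ∧ g ≫ iX.hom = iB.hom ≫ g' ∧
    S.push iA.hom δ = S.pull iX.hom δ'

/-- A chain of `t` composable extriangles: inflations `obj i ⟶ obj (i+1)` each fitting
in an extriangle with cone `factor i`.  This underlies filtrations, inflation series
and composition series alike. -/
structure FChain (t : ℕ) where
  obj : Fin (t + 1) → C
  factor : Fin t → C
  f : ∀ i : Fin t, obj i.castSucc ⟶ obj i.succ
  g : ∀ i : Fin t, obj i.succ ⟶ factor i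
  δ : ∀ i : Fin t, S.Ext (factor i) (obj i.castSucc)
  ext : ∀ i : Fin t, S.IsExtriangle (f i) (g i) (δ i)

/-- The composite `obj 0 ⟶ obj i` of the morphisms of a chain. -/
def FChain.comp {t : ℕ} (c : S.FChain t) : ∀ i : Fin (t + 1), c.obj 0 ⟶ c.obj i :=
  Fin.induction (𝟙 _) (fun i ih => ih ≫ c.f i)

/-- The subcategory `F(P)` of objects admitting a filtration with factors in `P`. -/
def Filt (P : Set C) : Set C :=
  {M | ∃ (t : ℕ) (c : S.FChain t), IsZero (c.obj 0) ∧ c.obj (Fin.last t) = M ∧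
      ∀ i, c.factor i ∈ P}

/-- An `(E, s)`-simple object: a non-zero object `M` such that in every extriangle
`A →a M → X ⇢` the inflation `a` is zero or an isomorphism. -/
def SSimple (M : C) : Prop :=
  ¬ IsZero M ∧ ∀ (A X : C) (a : A ⟶ M) (g : M ⟶ X) (δ : S.Ext X A),
    S.IsExtriangle a g δ → a = 0 ∨ IsIso a

/-- The zero objects of `C` are `(E, s)`-simple-like. -/
def ZeroSimpleLike : Prop :=
  ∀ (A Z X : C) (f : A ⟶ Z) (g : Z ⟶ X) (δ : S.Ext X A),
    IsZero Z → S.IsExtriangle f g δ → IsZero A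

/-- `c` is an `(E, s)`-composition series of `M`. -/
def IsCompSeries {t : ℕ} (c : S.FChain t) (M : C) : Prop :=
  IsZero (c.obj 0) ∧ c.obj (Fin.last t) = M ∧ ∀ i, S.SSimple (c.factor i)

/-- `(A, E, s)` is a length extriangulated category. -/
def LengthCat : Prop :=
  ∀ M : C, (∃ (t : ℕ) (c : S.FChain t), S.IsCompSeries c M) ∧
    ∃ N : ℕ, ∀ (t : ℕ) (c : S.FChain t), S.IsCompSeries c M → t ≤ N

/-- `(A, E, s)` is a Jordan–Hölder extriangulated category: any two composition series
of an object have the same length and, up to a permutation, isomorphic simple factors. -/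
def JordanHolder : Prop :=
  ∀ (M : C) (t t' : ℕ) (c : S.FChain t) (c' : S.FChain t'),
    S.IsCompSeries c M → S.IsCompSeries c' M →
    ∃ e : Fin t ≃ Fin t', ∀ i, Nonempty (c.factor i ≅ c'.factor (e i))

/-- `c` is an `(E, s)`-inflation series of `B`: a filtration of `B` with non-zero factors. -/
def IsInflSeries {t : ℕ} (c : S.FChain t) (B : C) : Prop :=
  IsZero (c.obj 0) ∧ c.obj (Fin.last t) = B ∧ ∀ i, ¬ IsZero (c.factor i)

/-- `X` and `Y` admit isomorphic `(E, s)`-inflation series. -/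
def HaveIsoInflSeries (X Y : C) : Prop :=
  ∃ (t : ℕ) (c d : S.FChain t), S.IsInflSeries c X ∧ S.IsInflSeries d Y ∧
    ∃ e : Equiv.Perm (Fin t), ∀ i, Nonempty (c.factor i ≅ d.factor (e i))

/-- Simplicity of `M` with respect to the extriangulated structure restricted to the
extension-closed subcategory `𝒮`: extriangles of the restricted structure are exactly
the ambient extriangles all of whose terms lie in `𝒮`. -/
def SimpleIn (𝒮 : Set C) (M : C) : Prop :=
  M ∈ 𝒮 ∧ ¬ IsZero M ∧ ∀ (A X : C) (a : A ⟶ M) (g : M ⟶ X) (δ : S.Ext X A),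
    A ∈ 𝒮 → X ∈ 𝒮 → S.IsExtriangle a g δ → a = 0 ∨ IsIso a

/-- `c` is a composition series of `M` in the extriangulated structure restricted to `𝒮`. -/
def IsCompSeriesIn (𝒮 : Set C) {t : ℕ} (c : S.FChain t) (M : C) : Prop :=
  IsZero (c.obj 0) ∧ c.obj (Fin.last t) = M ∧ (∀ i, c.obj i ∈ 𝒮) ∧
    ∀ i, S.SimpleIn 𝒮 (c.factor i)

section Star

variable [HasZeroObject C] [HasFiniteBiproducts C]

/-- The subcategory `P ∗ Q` of objects `Z` admitting an extriangle `X → Z → Y ⇢`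
with `X ∈ P` and `Y ∈ Q`. -/
def star (P Q : Set C) : Set C :=
  {Z | ∃ (X Y : C) (f : X ⟶ Z) (g : Z ⟶ Y) (δ : S.Ext Y X),
      X ∈ P ∧ Y ∈ Q ∧ S.IsExtriangle f g δ}

/-- Iterated `∗` of a list of subcategories (the empty `∗` being the zero objects). -/
def starMany : List (Set C) → Set C
  | [] => {Z | IsZero Z}
  | P :: l => S.star P (starMany l)

end Star

/-- The relative projectives `P(P) = {Z : E(Z, Y) = 0 for all Y ∈ F(P)}`. -/
def projSet (P : Set C) : Set C :=
  {Z | ∀ Y ∈ S.Filt P, ∀ δ : S.Ext Z Y, δ = 0}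

/-- `Hom(W, −)` is left exact on the extriangulated structure restricted to `𝒮`:
for every extriangle `A →a B → X ⇢` with all terms in `𝒮`, composition with `a`
is injective on morphisms from `W`. -/
def HomLeftExactOn (W : C) (𝒮 : Set C) : Prop :=
  ∀ (A B X : C) (a : A ⟶ B) (g : B ⟶ X) (δ : S.Ext X A),
    A ∈ 𝒮 → B ∈ 𝒮 → X ∈ 𝒮 → S.IsExtriangle a g δ →
    ∀ φ ψ : W ⟶ A, φ ≫ a = ψ ≫ a → φ = ψ

/-- The subset of the free abelian group on objects consisting of the defining
relations of the Grothendieck group `K₀(A, E, s)`. -/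
def K0Rels : Set (FreeAbelianGroup C) :=
  {x | ∃ (A B X : C) (f : A ⟶ B) (g : B ⟶ X) (δ : S.Ext X A), S.IsExtriangle f g δ ∧
      x = FreeAbelianGroup.of A + FreeAbelianGroup.of X - FreeAbelianGroup.of B} ∪
  {x | ∃ (X Y : C) (_ : X ≅ Y), x = FreeAbelianGroup.of X - FreeAbelianGroup.of Y}

/-- `[M] = [M']` in the Grothendieck group `K₀(A, E, s)`, the quotient of the free
abelian group on (isomorphism classes of) objects by the extriangle relations. -/
def GrpRel (M M' : C) : Prop :=
  FreeAbelianGroup.of M - FreeAbelianGroup.of M' ∈ AddSubgroup.closure S.K0Rels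

end PreExt

/-- The congruence defining the Grothendieck monoid: `MonRel S M M'` holds if and only
if `[M] = [M']` in the Grothendieck monoid `M(A, E, s)`, the quotient of the monoid of
isomorphism classes of objects (under `⊞`) by the congruence generated by
`[B] ∼ [A] + [X]` for each extriangle `A → B → X ⇢`. -/
inductive MonRel {C : Type u} [Category.{v} C] [Preadditive C] [HasZeroObject C]
    [HasFiniteBiproducts C] (S : PreExt C) : C → C → Prop
  | of {A B X : C} {f : A ⟶ B} {g : B ⟶ X} {δ : S.Ext X A}
      (h : S.IsExtriangle f g δ) : MonRel S B (A ⊞ X)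
  | iso {X Y : C} (e : X ≅ Y) : MonRel S X Y
  | symm {X Y : C} : MonRel S X Y → MonRel S Y X
  | trans {X Y Z : C} : MonRel S X Y → MonRel S Y Z → MonRel S X Z
  | add {X Y : C} (Z : C) : MonRel S X Y → MonRel S (X ⊞ Z) (Y ⊞ Z)

/-- `[M]` is an atom of the Grothendieck monoid `M(A, E, s)`. -/
def IsAtomClass {C : Type u} [Category.{v} C] [Preadditive C] [HasZeroObject C]
    [HasFiniteBiproducts C] (S : PreExt C) (M : C) : Prop :=
  ¬ MonRel S M 0 ∧ ∀ X Y : C, MonRel S M (X ⊞ Y) → MonRel S X 0 ∨ MonRel S Y 0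

/-- An additive category is weakly idempotent complete if every retraction admits a kernel. -/
def WeaklyIdemComplete (C : Type u) [Category.{v} C] [Preadditive C] : Prop :=
  ∀ (X Y : C) (r : X ⟶ Y), IsSplitEpi r → HasKernel r

/-- A set of objects is closed under direct summands. -/
def ClosedSummands {C : Type u} [Category.{v} C] [Preadditive C] [HasZeroObject C]
    [HasFiniteBiproducts C] (P : Set C) : Prop :=
  ∀ (X Y Z : C), Z ∈ P → Nonempty (Z ≅ X ⊞ Y) → X ∈ P

/-- A Krull–Schmidt category: every object is a finite biproduct of objects having
local endomorphism rings. -/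
def KrullSchmidtCat (C : Type u) [Category.{v} C] [Preadditive C] [HasZeroObject C]
    [HasFiniteBiproducts C] : Prop :=
  ∀ X : C, ∃ (n : ℕ) (Y : Fin n → C),
    (∀ i, IsLocalRing (End (Y i))) ∧ Nonempty (X ≅ ⨁ Y)

/-- The closure `add Ψ` of a set of objects under finite direct sums and isomorphisms. -/
def addSet {C : Type u} [Category.{v} C] [Preadditive C] [HasZeroObject C]
    [HasFiniteBiproducts C] (P : Set C) : Set C :=
  {X | ∃ (m : ℕ) (f : Fin m → C), (∀ k, f k ∈ P) ∧ Nonempty (X ≅ ⨁ f)}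

/-- An indecomposable object. -/
def Indec {C : Type u} [Category.{v} C] [Preadditive C] [HasZeroObject C]
    [HasFiniteBiproducts C] (X : C) : Prop :=
  ¬ IsZero X ∧ ∀ (Y Z : C), Nonempty (X ≅ Y ⊞ Z) → IsZero Y ∨ IsZero Z

/-- A morphism `q` is right minimal. -/
def RightMinimal {C : Type u} [Category.{v} C] {X Y : C} (q : X ⟶ Y) : Prop :=
  ∀ g : X ⟶ X, g ≫ q = q → IsIso g

/-- The extra structure making an extriangulated category into an artin `R`-linear
extriangulated category: an `R`-module structure on each `E(X, A)` for which `E` is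
`R`-bilinear, with all Hom-sets and all `E(X, A)` of finite length over `R`. -/
structure ArtinLinear {C : Type u} [Category.{v} C] [Preadditive C]
    (R : Type*) [CommRing R] [CategoryTheory.Linear R C] (S : PreExt C) where
  module : ∀ X A : C, Module R (S.Ext X A)
  push_smul : ∀ {X A A' : C} (r : R) (a : A ⟶ A') (δ : S.Ext X A),
      S.push (r • a) δ = letI := module X A'; r • S.push a δ
  pull_smul : ∀ {X' X A : C} (r : R) (c : X' ⟶ X) (δ : S.Ext X A),
      S.pull (r • c) δ = letI := module X' A; r • S.pull c δ
  homFinite : ∀ X Y : C, IsFiniteLength R (X ⟶ Y)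
  extFinite : ∀ X A : C, letI := module X A; IsFiniteLength R (S.Ext X A)

/-- An `E`-stratifying system: a finite family of indecomposable objects subject to
the orthogonality axioms (S1) and (S2). -/
structure IsStratSys {C : Type u} [Category.{v} C] [Preadditive C] [HasZeroObject C]
    [HasFiniteBiproducts C] (S : PreExt C) {n : ℕ} (Φ : Fin n → C) : Prop where
  indec : ∀ i, Indec (Φ i)
  s1 : ∀ i j : Fin n, i < j → ∀ φ : Φ j ⟶ Φ i, φ = 0
  s2 : ∀ i j : Fin n, i ≤ j → ∀ δ : S.Ext (Φ j) (Φ i), δ = 0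

/-- The data of extriangles `K i → Q i → Φ i ⇢η i` with `K i ∈ F(Φ_{j>i})`, as in
axiom (PS2) of a projective `E`-stratifying system. -/
structure ProjData {C : Type u} [Category.{v} C] [Preadditive C]
    (S : PreExt C) {n : ℕ} (Φ Q : Fin n → C) where
  K : Fin n → C
  k : ∀ i, K i ⟶ Q i
  q : ∀ i, Q i ⟶ Φ i
  η : ∀ i, S.Ext (Φ i) (K i)
  ext : ∀ i, S.IsExtriangle (k i) (q i) (η i)
  kmem : ∀ i, K i ∈ S.Filt (Φ '' {j | i < j})

/-- `(Φ, Q)` is a projective `E`-stratifying system. -/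
def IsProjSS {C : Type u} [Category.{v} C] [Preadditive C] [HasZeroObject C]
    [HasFiniteBiproducts C] (S : PreExt C) {n : ℕ} (Φ Q : Fin n → C) : Prop :=
  IsStratSys S Φ ∧ (∀ i j : Fin n, ∀ δ : S.Ext (Q i) (Φ j), δ = 0) ∧
    Nonempty (ProjData S Φ Q)

/-- `(Φ, Q)` is a minimal projective `E`-stratifying system: the morphisms `q i` of
the extriangles witnessing (PS2) may be chosen right minimal. -/
def IsMinProjSS {C : Type u} [Category.{v} C] [Preadditive C] [HasZeroObject C]
    [HasFiniteBiproducts C] (S : PreExt C) {n : ℕ} (Φ Q : Fin n → C) : Prop :=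
  IsStratSys S Φ ∧ (∀ i j : Fin n, ∀ δ : S.Ext (Q i) (Φ j), δ = 0) ∧
    ∃ d : ProjData S Φ Q, ∀ i, RightMinimal (d.q i)

/-!
If the middle term of an extriangle `A → B → X ⇢δ` is zero, so is `A` (the zero object is
simple-like), hence `δ = 0` and `B ≅ A ⊞ X`; thus being zero is invariant under the congruence
defining the Grothendieck monoid, which gives (i) and (ii). For (iii) the invariant is being
isomorphic to a fixed simple object `T`. It is preserved because an extriangle
`A →f T →g X ⇢δ` splits: `f` invertible forces `X = 0`, and `f = 0` forces `A = 0`. The latter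
is where weak idempotent completeness enters: `g` is a split monomorphism, `δ` is pulled back
from the kernel `K` of a retraction of `g`, and the realisation `A → M → K` of that pullback has
both morphisms zero, so `M = 0` and `A = 0` by simple-likeness.
-/

namespace PreExt

variable {C : Type u} [Category.{v} C] [Preadditive C] (S : PreExt C)

lemma pull_pull {X' X'' X A : C} (c : X' ⟶ X'') (c' : X'' ⟶ X) (δ : S.Ext X A) :
    S.pull c (S.pull c' δ) = S.pull (c ≫ c') δ := by
  simp [pull]

lemma push_id {X A : C} (δ : S.Ext X A) : S.push (𝟙 A) δ = δ := by
  simp [push]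

lemma pull_id {X A : C} (δ : S.Ext X A) : S.pull (𝟙 X) δ = δ := by
  simp [pull]

lemma push_zero {X A A' : C} (a : A ⟶ A') : S.push a (0 : S.Ext X A) = 0 := by
  simp [push]

lemma pull_zero {X' X A : C} (c : X' ⟶ X) : S.pull c (0 : S.Ext X A) = 0 := by
  simp [pull]

end PreExt

namespace PreExt.IsET

variable {C : Type u} [Category.{v} C] [Preadditive C] [HasFiniteBiproducts C] {S : PreExt C}
  {A B X : C} {f : A ⟶ B} {g : B ⟶ X} {δ : S.Ext X A}

lemma push_zero_hom (hS : S.IsET) {A' : C} (δ : S.Ext X A) : S.push (0 : A ⟶ A') δ = 0 := by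
  simpa using hS.push_add (0 : A ⟶ A') 0 δ

lemma pull_zero_hom (hS : S.IsET) {X' : C} (δ : S.Ext X A) : S.pull (0 : X' ⟶ X) δ = 0 := by
  simpa using hS.pull_add (0 : X' ⟶ X) 0 δ

lemma ext_eq_zero_of_isZero_left (hS : S.IsET) (hA : IsZero A) (δ : S.Ext X A) :
    δ = 0 := by
  rw [← S.push_id δ, hA.eq_of_src (𝟙 A) 0, hS.push_zero_hom]

lemma ext_eq_zero_of_isZero_right (hS : S.IsET) (hX : IsZero X) (δ : S.Ext X A) :
    δ = 0 := by
  rw [← S.pull_id δ, hX.eq_of_src (𝟙 X) 0, hS.pull_zero_hom]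

lemma pull_deflation_eq_zero (hS : S.IsET) (h : S.IsExtriangle f g δ) : S.pull g δ = 0 := by
  obtain ⟨a, -, ha⟩ := hS.et3op (hS.realize_zero A B) h biprod.snd g rfl
  rw [S.push_zero] at ha
  exact ha.symm

lemma yoneda_exact₂ (hS : S.IsET) (h : S.IsExtriangle f g δ) {Y : C} (u : B ⟶ Y)
    (hu : f ≫ u = 0) : ∃ c : X ⟶ Y, u = g ≫ c := by
  obtain ⟨c, hc, -⟩ := hS.et3 h (hS.realize_zero A Y) 0 (biprod.lift 0 u)
    (by apply biprod.hom_ext <;> simp [hu])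
  exact ⟨c, by simpa using hc.symm⟩

lemma coyoneda_exact₂ (hS : S.IsET) (h : S.IsExtriangle f g δ) {Y : C} (v : Y ⟶ B)
    (hv : v ≫ g = 0) : ∃ a : Y ⟶ A, v = a ≫ f := by
  obtain ⟨a, ha, -⟩ := hS.et3op (hS.realize_zero Y B) h (biprod.desc v (𝟙 B)) g
    (by apply biprod.hom_ext' <;> simp [hv])
  exact ⟨a, by simpa using ha⟩

lemma nonempty_iso_biprod (hS : S.IsET) (h : S.IsExtriangle f g δ) (hAX : IsZero A ∨ IsZero X) :
    Nonempty (B ≅ A ⊞ X) := by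
  obtain rfl : δ = 0 :=
    hAX.elim (hS.ext_eq_zero_of_isZero_left · δ) (hS.ext_eq_zero_of_isZero_right · δ)
  obtain ⟨j, -, -⟩ := hS.realize_unique h (hS.realize_zero A X)
  exact ⟨j⟩

lemma isZero_of_isIso (hS : S.IsET) (h : S.IsExtriangle f g δ) [IsIso f] : IsZero X := by
  obtain ⟨c, -, hδ⟩ := hS.et3 h (hS.realize_zero A A) (𝟙 A) (inv f ≫ biprod.inl) (by simp)
  rw [S.push_id, S.pull_zero] at hδ
  subst hδ
  obtain ⟨j, hj, hg⟩ := hS.realize_unique h (hS.realize_zero A X)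
  have hg0 : g = 0 := by
    rw [← cancel_epi f, ← hg, reassoc_of% hj]
    simp
  rw [IsZero.iff_id_eq_zero, ← biprod.inr_snd, ← j.inv_hom_id_assoc biprod.snd, hg, hg0]
  simp

lemma isIso_of_isZero (hS : S.IsET) (h : S.IsExtriangle f g δ) (hX : IsZero X) : IsIso f := by
  obtain rfl := hS.ext_eq_zero_of_isZero_right hX δ
  obtain ⟨j, hj, -⟩ := hS.realize_unique h (hS.realize_zero A X)
  rw [show f = (isoBiprodZero hX).hom ≫ j.inv by simp [← hj]]
  infer_instance

lemma isZero_iff (hS : S.IsET) (hz : S.ZeroSimpleLike) (h : S.IsExtriangle f g δ) :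
    IsZero B ↔ IsZero A ∧ IsZero X := by
  have hsplit (hA : IsZero A) : Nonempty (B ≅ A ⊞ X) := hS.nonempty_iso_biprod h (.inl hA)
  constructor
  · intro hB
    rw [← biprod_isZero_iff]
    exact hB.of_iso (hsplit (hz A B X f g δ hB h)).some.symm
  · intro hAX
    exact ((biprod_isZero_iff A X).2 hAX).of_iso (hsplit hAX.1).some

lemma isZero_of_zero_inflation (hS : S.IsET) (hz : S.ZeroSimpleLike)
    (hw : WeaklyIdemComplete C) (h : S.IsExtriangle (0 : A ⟶ B) g δ) : IsZero A := by
  obtain ⟨r, hr⟩ := hS.yoneda_exact₂ h (𝟙 B) (by simp)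
  have : HasKernel r := hw X B r ⟨⟨⟨g, hr.symm⟩⟩⟩
  let q : X ⟶ kernel r := kernel.lift r (𝟙 X - r ≫ g) (by simp [← hr])
  have hδ : S.pull q (S.pull (kernel.ι r) δ) = δ := by
    have hrg : S.pull (r ≫ g) δ = 0 := by
      rw [← S.pull_pull, hS.pull_deflation_eq_zero h, S.pull_zero]
    have := hS.pull_add (q ≫ kernel.ι r) (r ≫ g) δ
    rw [kernel.lift_ι, sub_add_cancel, S.pull_id, hrg, add_zero] at this
    rw [S.pull_pull, kernel.lift_ι, ← this]
  obtain ⟨M, m, e, hε⟩ := hS.realize_exists (S.pull (kernel.ι r) δ)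
  obtain ⟨b', hb', -⟩ := hS.realize_map h hε (𝟙 A) q (by rw [S.push_id, hδ])
  have hm : m = 0 := by simpa using hb'.symm
  obtain ⟨b, -, hb⟩ := hS.realize_map hε h (𝟙 A) (kernel.ι r) (by rw [S.push_id])
  have hb0 : b = 0 := by
    simpa [← hr] using congrArg (· ≫ r) hb
  have he : e = 0 := by
    rw [← cancel_mono (kernel.ι r), zero_comp, ← hb, hb0, zero_comp]
  obtain ⟨a, ha⟩ := hS.coyoneda_exact₂ hε (𝟙 M) (by simp [he])
  refine hz A M _ m e _ ?_ hε
  rw [IsZero.iff_id_eq_zero, ha, hm, comp_zero]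

end PreExt.IsET

namespace PreExt.SSimple

variable {C : Type u} [Category.{v} C] [Preadditive C] [HasFiniteBiproducts C] {S : PreExt C}

lemma of_iso (hS : S.IsET) {M N : C} (hN : S.SSimple N) (e : M ≅ N) : S.SSimple M := by
  refine ⟨fun hM => hN.1 (hM.of_iso e.symm), fun A X a g δ h => ?_⟩
  rcases hN.2 A X (a ≫ e.hom) (e.inv ≫ g) δ (hS.realize_iso e h) with h0 | hiso
  · left
    simpa using congrArg (· ≫ e.inv) h0
  · right
    exact IsIso.of_isIso_comp_right a e.hom

lemma isZero_or_isZero_of_biprod (hS : S.IsET) {X Y : C} (h : S.SSimple (X ⊞ Y)) :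
    IsZero X ∨ IsZero Y := by
  rcases h.2 X Y biprod.inl biprod.snd 0 (hS.realize_zero X Y) with h0 | hiso
  · left
    rw [IsZero.iff_id_eq_zero, ← biprod.inl_fst, h0, zero_comp]
  · exact .inr (hS.isZero_of_isIso (hS.realize_zero X Y))

lemma isZero_or_isZero (hS : S.IsET) (hz : S.ZeroSimpleLike) (hw : WeaklyIdemComplete C)
    {A B X : C} {f : A ⟶ B} {g : B ⟶ X} {δ : S.Ext X A} (hB : S.SSimple B)
    (h : S.IsExtriangle f g δ) : IsZero A ∨ IsZero X := by
  rcases hB.2 A X f g δ h with rfl | hiso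
  · exact .inl (hS.isZero_of_zero_inflation hz hw h)
  · exact .inr (hS.isZero_of_isIso h)

end PreExt.SSimple

section GrothendieckMonoid

variable {C : Type u} [Category.{v} C] [Preadditive C] [HasZeroObject C] [HasFiniteBiproducts C]
  {S : PreExt C}

lemma MonRel.isZero_iff (hS : S.IsET) (hz : S.ZeroSimpleLike) {M N : C} (h : MonRel S M N) :
    IsZero M ↔ IsZero N := by
  induction h with
  | of h => rw [biprod_isZero_iff, hS.isZero_iff hz h]
  | iso e => exact ⟨fun h => h.of_iso e.symm, fun h => h.of_iso e⟩
  | symm _ ih => exact ih.symm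
  | trans _ _ ih₁ ih₂ => exact ih₁.trans ih₂
  | add Z _ ih => rw [biprod_isZero_iff, biprod_isZero_iff, ih]

lemma monRel_zero_iff (hS : S.IsET) (hz : S.ZeroSimpleLike) (M : C) :
    MonRel S M 0 ↔ IsZero M :=
  ⟨fun h => (h.isZero_iff hS hz).2 (isZero_zero C), fun h => .iso h.isoZero⟩

lemma MonRel.nonempty_iso_iff (hS : S.IsET) (hz : S.ZeroSimpleLike) (hw : WeaklyIdemComplete C)
    {M N : C} (h : MonRel S M N) {T : C} (hT : S.SSimple T) :
    Nonempty (M ≅ T) ↔ Nonempty (N ≅ T) := by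
  induction h with
  | @of A B X f g δ h =>
    suffices hsplit : Nonempty (B ≅ T) ∨ Nonempty (A ⊞ X ≅ T) → Nonempty (B ≅ A ⊞ X) by
      exact ⟨fun ⟨i⟩ => ⟨(hsplit (.inl ⟨i⟩)).some.symm ≪≫ i⟩,
        fun ⟨i⟩ => ⟨(hsplit (.inr ⟨i⟩)).some ≪≫ i⟩⟩
    rintro (⟨⟨i⟩⟩ | ⟨⟨i⟩⟩)
    · exact hS.nonempty_iso_biprod h ((hT.of_iso hS i).isZero_or_isZero hS hz hw h)
    · exact hS.nonempty_iso_biprod h ((hT.of_iso hS i).isZero_or_isZero_of_biprod hS)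
  | iso e => exact ⟨fun ⟨i⟩ => ⟨e.symm ≪≫ i⟩, fun ⟨i⟩ => ⟨e ≪≫ i⟩⟩
  | symm _ ih => exact ih.symm
  | trans _ _ ih₁ ih₂ => exact ih₁.trans ih₂
  | add Z hXY ih =>
    have step {X Y : C} (hzero : IsZero X ↔ IsZero Y)
        (hiso : Nonempty (X ≅ T) ↔ Nonempty (Y ≅ T)) :
        Nonempty (X ⊞ Z ≅ T) → Nonempty (Y ⊞ Z ≅ T) := by
      rintro ⟨i⟩
      rcases (hT.of_iso hS i).isZero_or_isZero_of_biprod hS with hX | hZ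
      · exact ⟨(isoZeroBiprod (hzero.1 hX)).symm ≪≫ isoZeroBiprod hX ≪≫ i⟩
      · obtain ⟨j⟩ := hiso.1 ⟨isoBiprodZero hZ ≪≫ i⟩
        exact ⟨(isoBiprodZero hZ).symm ≪≫ j⟩
    have hzero := hXY.isZero_iff hS hz
    exact ⟨step hzero ih, step hzero.symm ih.symm⟩

lemma PreExt.SSimple.isAtomClass (hS : S.IsET) (hz : S.ZeroSimpleLike)
    (hw : WeaklyIdemComplete C) {M : C} (hM : S.SSimple M) : IsAtomClass S M := by
  refine ⟨fun h => hM.1 ((monRel_zero_iff hS hz M).1 h), fun X Y h => ?_⟩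
  obtain ⟨i⟩ := (h.nonempty_iso_iff hS hz hw hM).1 ⟨Iso.refl M⟩
  simpa only [monRel_zero_iff hS hz] using (hM.of_iso hS i).isZero_or_isZero_of_biprod hS

lemma IsAtomClass.sSimple (hS : S.IsET) (hz : S.ZeroSimpleLike) {M : C} (hM : IsAtomClass S M) :
    S.SSimple M := by
  refine ⟨fun h => hM.1 ((monRel_zero_iff hS hz M).2 h), fun A X a g δ h => ?_⟩
  rcases hM.2 A X (.of h) with hA | hX
  · exact .inl (((monRel_zero_iff hS hz A).1 hA).eq_of_src a 0)
  · exact .inr (hS.isIso_of_isZero h ((monRel_zero_iff hS hz X).1 hX))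

end GrothendieckMonoid

section Statements

variable {C : Type u} [Category.{v} C] [Preadditive C] [HasZeroObject C] [HasFiniteBiproducts C]

theorem stmt9_general (S : PreExt C) (hS : S.IsET) (hzero : S.ZeroSimpleLike) :
    (∀ M : C, MonRel S M 0 ↔ IsZero M) ∧
    (∀ X Y : C, MonRel S (X ⊞ Y) 0 → MonRel S X 0 ∧ MonRel S Y 0) ∧
    (WeaklyIdemComplete C →
      (∀ M : C, S.SSimple M → IsAtomClass S M) ∧
      (∀ M M' : C, S.SSimple M → S.SSimple M' → MonRel S M M' → Nonempty (M ≅ M')) ∧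
      (∀ A : C, IsAtomClass S A → ∃ M : C, S.SSimple M ∧ MonRel S A M)) := by
  refine ⟨monRel_zero_iff hS hzero, fun X Y h => ?_, fun hw => ⟨?_, ?_, ?_⟩⟩
  · simpa only [monRel_zero_iff hS hzero, biprod_isZero_iff] using h
  · exact fun M hM => hM.isAtomClass hS hzero hw
  · intro M M' hM _ h
    exact ((h.nonempty_iso_iff hS hzero hw hM).1 ⟨Iso.refl M⟩).map Iso.symm
  · exact fun A hA => ⟨A, hA.sSimple hS hzero, .iso (Iso.refl A)⟩

theorem stmt9 (S : PreExt C) (hS : S.IsET) [EssentiallySmall.{v} C]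
    (hzero : S.ZeroSimpleLike) :
    (∀ M : C, MonRel S M 0 ↔ IsZero M) ∧
    (∀ X Y : C, MonRel S (X ⊞ Y) 0 → MonRel S X 0 ∧ MonRel S Y 0) ∧
    (WeaklyIdemComplete C →
      (∀ M : C, S.SSimple M → IsAtomClass S M) ∧
      (∀ M M' : C, S.SSimple M → S.SSimple M' → MonRel S M M' → Nonempty (M ≅ M')) ∧
      (∀ A : C, IsAtomClass S A → ∃ M : C, S.SSimple M ∧ MonRel S A M)) :=
  stmt9_general S hS hzero

end Statements

end ExtriPaper
end

section
/- Let R be a commutative artinian ring, let (A, E, s) be an artin R-linear extriangulated category, and let (Φ, Q) = ({Φ_1, …, Φ_n}, {Q_1, …, Q_n}) be a minimal projective E-stratifying system, with chosen extriangles K_i → Q_i →q_i Φ_i ⇢η_i as in (PS2). If for each 1 ≤ i ≤ n the functor Hom_A(Q_i, −) is left exact on the extriangulated category (F(Φ), E|F(Φ), s|F(Φ)), then each q_i : Q_i → Φ_i is non-zero. -/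
/-!
Common axiomatic framework: extriangulated categories in the sense of Nakaoka–Palu,
formalised as a biadditive functor `E` together with a realisation predicate
`IsExtriangle` subject to the axioms (ET1)–(ET4), (ET3)ᵒᵖ, (ET4)ᵒᵖ.
-/

open CategoryTheory CategoryTheory.Limits ZeroObject

attribute [local instance] CategoryTheory.Limits.hasBinaryBiproducts_of_finite_biproducts

universe v u

namespace ExtriPaper

/-!
If `q i = 0`, right minimality forces `Q i = 0`, so `K i → 0 → Φ i` is an extriangle.
When `K i = 0` this makes `Φ i ≅ Q i = 0`, which is impossible. Otherwise the filtration of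
`K i` by `Φ_{j>i}` starts with some `Φ m`, `m > i`, and
`Φ m ≅ M₁ → M₂ → ⋯ → K i → Q i = 0` is a chain of inflations inside `F(Φ)`. Left exactness
of `Hom(Q m, −)` makes composition with this chain injective, so `q m = 0`, and descending
induction on `i` gives a contradiction.
-/

namespace PreExt

variable {C : Type u} [Category.{v} C] [Preadditive C] {S : PreExt C}

def FChain.trunc {t : ℕ} (c : S.FChain t) (l : ℕ) (h : l ≤ t) : S.FChain l where
  obj i := c.obj (Fin.castLE (by omega) i)
  factor i := c.factor (Fin.castLE h i)
  f i := c.f (Fin.castLE h i)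
  g i := c.g (Fin.castLE h i)
  δ i := c.δ (Fin.castLE h i)
  ext i := c.ext (Fin.castLE h i)

def FChain.tail {t : ℕ} (c : S.FChain (t + 1)) : S.FChain t where
  obj i := c.obj i.succ
  factor i := c.factor i.succ
  f i := c.f i.succ
  g i := c.g i.succ
  δ i := c.δ i.succ
  ext i := c.ext i.succ

def FChain.single {A B X : C} {f : A ⟶ B} {g : B ⟶ X} {δ : S.Ext X A}
    (h : S.IsExtriangle f g δ) : S.FChain 1 where
  obj := ![A, B]
  factor _ := X
  f | ⟨0, _⟩ => f
  g | ⟨0, _⟩ => g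
  δ | ⟨0, _⟩ => δ
  ext | ⟨0, _⟩ => h

lemma FChain.obj_mem_filt {t : ℕ} {c : S.FChain t} {P : Set C} (hz : IsZero (c.obj 0))
    (hfac : ∀ i, c.factor i ∈ P) (j : Fin (t + 1)) : c.obj j ∈ S.Filt P :=
  ⟨j, c.trunc j (Nat.le_of_lt_succ j.isLt), by simpa [FChain.trunc] using hz, rfl,
    fun _ => hfac _⟩

lemma mem_filt_of_isZero {Z : C} (hZ : IsZero Z) (P : Set C) : Z ∈ S.Filt P :=
  ⟨0, ⟨fun _ => Z, fun i => i.elim0, fun i => i.elim0, fun i => i.elim0, fun i => i.elim0,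
    fun i => i.elim0⟩, hZ, rfl, fun i => i.elim0⟩

lemma HomLeftExactOn.comp_cancel {W : C} {𝒮 : Set C} (hW : S.HomLeftExactOn W 𝒮) {t : ℕ}
    {c : S.FChain t} (hobj : ∀ i, c.obj i ∈ 𝒮) (hfac : ∀ i, c.factor i ∈ 𝒮)
    (j : Fin (t + 1)) (u v : W ⟶ c.obj 0) (h : u ≫ FChain.comp S c j = v ≫ FChain.comp S c j) :
    u = v := by
  induction j using Fin.induction with
  | zero => simpa [FChain.comp] using h
  | succ i ih =>
    simp only [FChain.comp, Fin.induction_succ, ← Category.assoc] at h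
    exact ih (hW _ _ _ _ _ _ (hobj _) (hobj _) (hfac i) (c.ext i) _ _ h)

lemma HomLeftExactOn.eq_zero_of_isZero {W : C} {𝒮 : Set C} (hW : S.HomLeftExactOn W 𝒮)
    {A B X : C} {a : A ⟶ B} {g : B ⟶ X} {δ : S.Ext X A} (h : S.IsExtriangle a g δ)
    (hA : A ∈ 𝒮) (hB : B ∈ 𝒮) (hX : X ∈ 𝒮) (hB0 : IsZero B) (φ : W ⟶ A) : φ = 0 :=
  hW _ _ _ _ _ _ hA hB hX h _ _ (hB0.eq_of_tgt _ _)

section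

variable [HasFiniteBiproducts C]

lemma IsET.ext_eq_zero_of_isZero (hS : S.IsET) {X A : C} (hA : IsZero A) (δ : S.Ext X A) :
    δ = 0 := by
  have h := hS.push_add (0 : A ⟶ A) 0 δ
  rw [add_zero, left_eq_add, hA.eq_of_src 0 (𝟙 A)] at h
  simpa [push] using h

lemma IsET.isIso_of_isZero_s17 (hS : S.IsET) {A B X : C} {f : A ⟶ B} {g : B ⟶ X}
    {δ : S.Ext X A} (h : S.IsExtriangle f g δ) (hA : IsZero A) : IsIso g := by
  obtain rfl := hS.ext_eq_zero_of_isZero hA δ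
  obtain ⟨e, -, rfl⟩ := hS.realize_unique h (hS.realize_zero A X)
  have : IsIso (biprod.snd : A ⊞ X ⟶ X) := (isoZeroBiprod hA).isIso_inv
  infer_instance

lemma IsET.mem_filt_of_mem [HasZeroObject C] (hS : S.IsET) {X : C} {P : Set C} (hX : X ∈ P) :
    X ∈ S.Filt P :=
  ⟨1, FChain.single (hS.realize_iso (isoZeroBiprod (isZero_zero C)).symm
    (hS.realize_zero 0 X)), isZero_zero C, rfl, fun _ => hX⟩

lemma HomLeftExactOn.hom_to_first_factor_eq_zero [HasZeroObject C] (hS : S.IsET) {W : C}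
    {P : Set C} (hW : S.HomLeftExactOn W (S.Filt P)) {t : ℕ} {c : S.FChain (t + 1)}
    (hz : IsZero (c.obj 0)) (hfac : ∀ i, c.factor i ∈ P) {A B X : C}
    (hA : c.obj (Fin.last (t + 1)) = A) {a : A ⟶ B} {g : B ⟶ X} {δ : S.Ext X A}
    (h : S.IsExtriangle a g δ) (hB : IsZero B) (hX : X ∈ S.Filt P) (φ : W ⟶ c.factor 0) :
    φ = 0 := by
  subst hA
  have hobj := FChain.obj_mem_filt hz hfac
  have := hS.isIso_of_isZero_s17 (c.ext 0) hz
  have hchain : φ ≫ inv (c.g 0) ≫ FChain.comp S c.tail (Fin.last t) = 0 :=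
    hW.eq_zero_of_isZero h (hobj _) (mem_filt_of_isZero hB P) hX hB _
  have hφ : φ ≫ inv (c.g 0) = 0 :=
    hW.comp_cancel (c := c.tail) (fun _ => hobj _) (fun _ => hS.mem_filt_of_mem (hfac _))
      (Fin.last t) _ 0 ((Category.assoc _ _ _).trans (hchain.trans zero_comp.symm))
  exact (cancel_mono (inv (c.g 0))).1 (by rw [hφ, zero_comp])

end

end PreExt

lemma RightMinimal.isZero_of_eq_zero {C : Type u} [Category.{v} C] [Preadditive C] {X Y : C}
    {q : X ⟶ Y} (hq : RightMinimal q) (h0 : q = 0) : IsZero X :=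
  have : IsIso (0 : X ⟶ X) := hq 0 (by rw [zero_comp, h0])
  IsZero.of_mono_zero X X

section Statements

variable {C : Type u} [Category.{v} C] [Preadditive C] [HasZeroObject C] [HasFiniteBiproducts C]

variable (R : Type*) [CommRing R] [IsArtinianRing R] [CategoryTheory.Linear R C]
  [IsIdempotentComplete C]

theorem stmt17_general (S : PreExt C) (hS : S.IsET)
    {n : ℕ} (Φ Q : Fin n → C) (hΦ : IsStratSys S Φ)
    (d : ProjData S Φ Q) (hmin : ∀ i, RightMinimal (d.q i))
    (hle : ∀ i, S.HomLeftExactOn (Q i) (S.Filt (Set.range Φ))) :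
    ∀ i, d.q i ≠ 0 := by
  intro i
  induction i using WellFoundedGT.induction with
  | _ i ih =>
    intro hq
    have hQ : IsZero (Q i) := (hmin i).isZero_of_eq_zero hq
    obtain ⟨t, c, hz, hK, hfac⟩ := d.kmem i
    cases t with
    | zero =>
      have := hS.isIso_of_isZero_s17 (d.ext i) (hK ▸ hz)
      exact (hΦ.indec i).1 (hQ.of_iso (asIso (d.q i)).symm)
    | succ t =>
      obtain ⟨m, hm, hΦm⟩ := hfac 0
      have hm0 := (hle m).hom_to_first_factor_eq_zero hS hz
        (fun l => Set.image_subset_range _ _ (hfac l)) hK (d.ext i) hQ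
        (hS.mem_filt_of_mem ⟨i, rfl⟩)
      rw [← hΦm] at hm0
      exact ih m hm (hm0 _)

theorem stmt17 (S : PreExt C) (hS : S.IsET) (art : ArtinLinear R S)
    {n : ℕ} (Φ Q : Fin n → C) (hΦ : IsStratSys S Φ)
    (hps1 : ∀ i j : Fin n, ∀ δ : S.Ext (Q i) (Φ j), δ = 0)
    (d : ProjData S Φ Q) (hmin : ∀ i, RightMinimal (d.q i))
    (hle : ∀ i, S.HomLeftExactOn (Q i) (S.Filt (Set.range Φ))) :
    ∀ i, d.q i ≠ 0 :=
  stmt17_general S hS Φ Q hΦ d hmin hle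

end Statements

end ExtriPaper
end
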